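/- For 1 ≤ i < j ≤ n let α_{i,j} := ξ(A_{i,j}) ∈ Aut(F_n). Then |α_{i,j}| = id_H, and τ₁(α_{i,j})(X_i) = X_i ⊗ X_j − X_j ⊗ X_i, τ₁(α_{i,j})(X_j) = −(X_i ⊗ X_j − X_j ⊗ X_i), and τ₁(α_{i,j})(X_k) = 0 for k ∉ {i, j}. Equivalently, τ₁(α_{i,j}) = (l_i − l_j) ⊗ (X_i ⊗ X_j − X_j ⊗ X_i), where l_i, l_j are coordinate functionals on H. -/

import Mathlib

noncomputable section
open scoped TensorProduct


/-- `H = Fin n →₀ ℤ`, the first integral homology of the free group. -/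
abbrev Hz (n : ℕ) : Type := Fin n →₀ ℤ

/-- The standard basis vector `X i`. -/
def Xz (n : ℕ) (i : Fin n) : Hz n := Finsupp.single i 1

/-- `H ⊗ℤ H`. -/
abbrev HHz (n : ℕ) : Type := Hz n ⊗[ℤ] Hz n

/-- The degree ≤ 2 truncation of the Magnus algebra: underlying set `H × (H ⊗ H)`,
with multiplication `(u,s)·(u',s') = (u+u', s+s'+u⊗u')`. -/
def Mn (n : ℕ) : Type := Hz n × HHz n

namespace Mn

variable {n : ℕ}

instance : Group (Mn n) where
  mul a b := (a.1 + b.1, a.2 + b.2 + a.1 ⊗ₜ[ℤ] b.1)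
  one := ((0 : Hz n), (0 : HHz n))
  inv a := (-a.1, -a.2 + a.1 ⊗ₜ[ℤ] a.1)
  mul_assoc a b c := by
    show (_, _) = (_, _)
    refine Prod.ext (add_assoc _ _ _) ?_
    show a.2 + b.2 + a.1 ⊗ₜ[ℤ] b.1 + c.2 + (a.1 + b.1) ⊗ₜ[ℤ] c.1
        = a.2 + (b.2 + c.2 + b.1 ⊗ₜ[ℤ] c.1) + a.1 ⊗ₜ[ℤ] (b.1 + c.1)
    rw [TensorProduct.add_tmul, TensorProduct.tmul_add]
    abel
  one_mul a := by
    show ((0 : Hz n) + a.1, (0 : HHz n) + a.2 + (0 : Hz n) ⊗ₜ[ℤ] a.1) = a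
    rw [TensorProduct.zero_tmul]
    simp
    rfl
  mul_one a := by
    show (a.1 + 0, a.2 + (0:HHz n) + a.1 ⊗ₜ[ℤ] (0 : Hz n)) = a
    rw [TensorProduct.tmul_zero]
    simp
    rfl
  inv_mul_cancel a := by
    show (-a.1 + a.1, (-a.2 + a.1 ⊗ₜ[ℤ] a.1) + a.2 + (-a.1) ⊗ₜ[ℤ] a.1) = ((0:Hz n), (0:HHz n))
    rw [TensorProduct.neg_tmul]
    refine Prod.ext (by simp) ?_
    show _ = (0 : HHz n)
    abel

end Mn

/-- The truncated standard Magnus expansion `Θ : F_n →* M_n`, `x_i ↦ (X_i, 0)`. -/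
def Theta (n : ℕ) : FreeGroup (Fin n) →* Mn n :=
  FreeGroup.lift fun i => ((Xz n i, 0) : Mn n)

/-- The abelianization map `a : F_n → H`, the first component of `Θ`. -/
def aMap (n : ℕ) (γ : FreeGroup (Fin n)) : Hz n := (Theta n γ).1

/-- `θ₂`, the second component of the truncated Magnus expansion. -/
def theta2 (n : ℕ) (γ : FreeGroup (Fin n)) : HHz n := (Theta n γ).2

/-- The braid relations on `m` generators `σ_0, …, σ_{m-1}` (0-based):
`σ i` and `σ j` commute for `i + 2 ≤ j`, and `σ i σ (i+1) σ i = σ (i+1) σ i σ (i+1)`. -/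
def braidRels (m : ℕ) : Set (FreeGroup (Fin m)) :=
  {r | (∃ i j : Fin m, (i : ℕ) + 2 ≤ (j : ℕ) ∧
          r = .of i * .of j * (.of i)⁻¹ * (.of j)⁻¹) ∨
       (∃ i j : Fin m, (i : ℕ) + 1 = (j : ℕ) ∧
          r = .of i * .of j * .of i * (.of j * .of i * .of j)⁻¹)}

/-- The braid group on `m+1` strings, presented with `m` generators. `B_n = Braid (n-1)`. -/
abbrev Braid (m : ℕ) : Type := PresentedGroup (braidRels m)

/-- The generator `σ_i` (0-based) of the braid group. -/
def sigma {m : ℕ} (i : Fin m) : Braid m := PresentedGroup.of i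

/-- The generator `σ_k` of the braid group indexed by a natural number `k`
(defined to be `1` out of range). -/
def sg (m : ℕ) (k : ℕ) : Braid m :=
  if h : k < m then sigma ⟨k, h⟩ else 1

/-- The pure braid generator `A_{i,j}` (`0`-based indices `i < j`):
`Ael m i j = σ_{j-1} ⋯ σ_{i+1} σ_i² σ_{i+1}⁻¹ ⋯ σ_{j-1}⁻¹` in `Braid m`. -/
def Ael (m : ℕ) (i : ℕ) : ℕ → Braid m
  | 0 => 1
  | (j + 1) =>
    if j = i then sg m i * sg m i
    else sg m j * Ael m i j * (sg m j)⁻¹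


/-! Write `x_k` for `FreeGroup.of k` and `a` for `aMap n`. Each pure braid generator `α = ξ(A_{i,j})`
sends every generator `x_k` to a conjugate `w x_k w⁻¹`, with the class `a(w)` equal to `-X_j`,
`-(X_i + X_j)` or `0` according as `k = i`, `k = j` or neither. This is proved by induction on `j`,
using `A_{i,j+1} = σ_j A_{i,j} σ_j⁻¹` and the fact that `σ_j` permutes `x_j, x_{j+1}` up to conjugacy.
Such an `α` then acts trivially on `H`, and since `θ₂(x_k) = 0` and
`θ₂(w x w⁻¹) = θ₂(x) + a(w) ⊗ a(x) - a(x) ⊗ a(w)`, we get `τ₁(α)(X_k) = a(w) ⊗ X_k - X_k ⊗ a(w)`. -/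

section Magnus

variable {n : ℕ}

lemma Mn.mul_fst (a b : Mn n) : (a * b).1 = a.1 + b.1 := rfl
lemma Mn.mul_snd (a b : Mn n) : (a * b).2 = a.2 + b.2 + a.1 ⊗ₜ[ℤ] b.1 := rfl
lemma Mn.inv_fst (a : Mn n) : a⁻¹.1 = -a.1 := rfl
lemma Mn.inv_snd (a : Mn n) : a⁻¹.2 = -a.2 + a.1 ⊗ₜ[ℤ] a.1 := rfl

lemma Theta_of (k : Fin n) : Theta n (.of k) = ((Xz n k, 0) : Mn n) := FreeGroup.lift_apply_of

lemma aMap_of (k : Fin n) : aMap n (.of k) = Xz n k := by rw [aMap, Theta_of]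

lemma theta2_of (k : Fin n) : theta2 n (.of k) = 0 := by rw [theta2, Theta_of]

lemma aMap_one : aMap n 1 = 0 := by rw [aMap, map_one]; rfl

lemma aMap_mul (g h : FreeGroup (Fin n)) : aMap n (g * h) = aMap n g + aMap n h := by
  rw [aMap, map_mul]; rfl

lemma aMap_inv (g : FreeGroup (Fin n)) : aMap n g⁻¹ = -aMap n g := by
  rw [aMap, map_inv]; rfl

lemma aMap_conj (w g : FreeGroup (Fin n)) : aMap n (w * g * w⁻¹) = aMap n g := by
  rw [aMap_mul, aMap_mul, aMap_inv]; abel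

lemma theta2_conj (w g : FreeGroup (Fin n)) :
    theta2 n (w * g * w⁻¹) =
      theta2 n g + aMap n w ⊗ₜ[ℤ] aMap n g - aMap n g ⊗ₜ[ℤ] aMap n w := by
  unfold theta2 aMap
  rw [map_mul, map_mul, map_inv, Mn.mul_snd, Mn.mul_snd, Mn.inv_snd, Mn.mul_fst, Mn.inv_fst,
    TensorProduct.add_tmul, TensorProduct.tmul_neg, TensorProduct.tmul_neg]
  abel

def abelMap (φ : FreeGroup (Fin n) →* FreeGroup (Fin n)) : Hz n →+ Hz n :=
  (Finsupp.linearCombination ℤ fun k => aMap n (φ (.of k))).toAddMonoidHom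

lemma abelMap_Xz (φ : FreeGroup (Fin n) →* FreeGroup (Fin n)) (k : Fin n) :
    abelMap φ (Xz n k) = aMap n (φ (.of k)) := by
  simp [abelMap, Xz]

lemma aMap_map (φ : FreeGroup (Fin n) →* FreeGroup (Fin n)) (γ : FreeGroup (Fin n)) :
    aMap n (φ γ) = abelMap φ (aMap n γ) := by
  induction γ using FreeGroup.induction_on with
  | C1 => rw [map_one, aMap_one, map_zero]
  | of k => rw [aMap_of, abelMap_Xz]
  | inv_of k h => rw [map_inv, aMap_inv, aMap_inv, map_neg, h]
  | mul g h hg hh => rw [map_mul, aMap_mul, aMap_mul, map_add, hg, hh]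

end Magnus

section Conjugation

variable {n : ℕ}

def MapsToConj (φ : MulAut (FreeGroup (Fin n))) (γ : FreeGroup (Fin n)) (v : Hz n) : Prop :=
  ∃ w, φ γ = w * γ * w⁻¹ ∧ aMap n w = v

namespace MapsToConj

variable {φ : MulAut (FreeGroup (Fin n))} {γ δ : FreeGroup (Fin n)} {u v : Hz n}

lemma conj_left (hγ : MapsToConj φ γ u) (hδ : MapsToConj φ δ v) :
    MapsToConj φ (γ * δ * γ⁻¹) v := by
  obtain ⟨w, hw, -⟩ := hγ
  obtain ⟨w', hw', hw'a⟩ := hδ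
  refine ⟨w * γ * w⁻¹ * w' * γ⁻¹, ?_, ?_⟩
  · rw [map_mul, map_mul, map_inv, hw, hw']; group
  · rw [aMap_mul, aMap_mul, aMap_conj, aMap_inv, hw'a]; abel

lemma mulAut_conj (h : MapsToConj φ γ v) (b : MulAut (FreeGroup (Fin n))) :
    MapsToConj (b * φ * b⁻¹) (b γ) (abelMap b.toMonoidHom v) := by
  obtain ⟨w, hw, rfl⟩ := h
  refine ⟨b w, ?_, aMap_map b.toMonoidHom w⟩
  simp only [MulAut.mul_apply, MulAut.inv_apply, MulEquiv.symm_apply_apply, hw, map_mul, map_inv]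

lemma aMap_eq (h : MapsToConj φ γ v) : aMap n (φ γ) = aMap n γ := by
  obtain ⟨w, hw, -⟩ := h
  rw [hw, aMap_conj]

lemma theta2_eq (h : MapsToConj φ γ v) :
    theta2 n (φ γ) = theta2 n γ + v ⊗ₜ[ℤ] aMap n γ - aMap n γ ⊗ₜ[ℤ] v := by
  obtain ⟨w, hw, rfl⟩ := h
  rw [hw, theta2_conj]

end MapsToConj

lemma addMonoidHom_eq_id_of_mapsToConj {φ : MulAut (FreeGroup (Fin n))} {c : Fin n → Hz n}
    (hφ : ∀ k, MapsToConj φ (.of k) (c k)) {Φ : Hz n →+ Hz n}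
    (hΦ : ∀ γ, Φ (aMap n γ) = aMap n (φ γ)) : Φ = AddMonoidHom.id (Hz n) :=
  Finsupp.addHom_ext' fun k => AddMonoidHom.ext_int <| by
    change Φ (Xz n k) = Xz n k
    rw [← aMap_of, hΦ, (hφ k).aMap_eq]

lemma tau_Xz_of_mapsToConj {φ : MulAut (FreeGroup (Fin n))} {k : Fin n} {v : Hz n}
    (hφ : MapsToConj φ (.of k) v) {Φ : Hz n →+ Hz n} {τ : Hz n →+ HHz n}
    (hτ : ∀ γ, τ (aMap n γ) = theta2 n γ -
      (TensorProduct.map Φ.toIntLinearMap Φ.toIntLinearMap) (theta2 n (φ⁻¹ γ))) :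
    τ (Xz n k) = v ⊗ₜ[ℤ] Xz n k - Xz n k ⊗ₜ[ℤ] v := by
  have h := hτ (φ (.of k))
  rwa [hφ.aMap_eq, aMap_of, MulAut.inv_apply, MulEquiv.symm_apply_apply, theta2_of, map_zero,
    sub_zero, hφ.theta2_eq, theta2_of, aMap_of, zero_add] at h

end Conjugation

section PureBraid

variable {n : ℕ}

def IsArtinGenerator (b : MulAut (FreeGroup (Fin n))) (p q : Fin n) : Prop :=
  b (.of p) = .of q ∧ b (.of q) = (.of q)⁻¹ * .of p * .of q ∧
    ∀ k, k ≠ p → k ≠ q → b (.of k) = .of k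

def pureBraidConjugator (i j k : Fin n) : Hz n :=
  if k = i then -Xz n j else if k = j then -(Xz n i + Xz n j) else 0

namespace IsArtinGenerator

variable {b : MulAut (FreeGroup (Fin n))} {p q : Fin n}

lemma abelMap_Xz_left (hb : IsArtinGenerator b p q) : abelMap b.toMonoidHom (Xz n p) = Xz n q := by
  rw [abelMap_Xz, MulEquiv.coe_toMonoidHom, hb.1, aMap_of]

lemma abelMap_Xz_of_ne (hb : IsArtinGenerator b p q) {k : Fin n} (hp : k ≠ p) (hq : k ≠ q) :
    abelMap b.toMonoidHom (Xz n k) = Xz n k := by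
  rw [abelMap_Xz, MulEquiv.coe_toMonoidHom, hb.2.2 k hp hq, aMap_of]

lemma apply_conj (hb : IsArtinGenerator b p q) :
    b (.of p * .of q * (.of p)⁻¹) = FreeGroup.of p := by
  rw [map_mul, map_mul, map_inv, hb.1, hb.2.1]; group

lemma mapsToConj_sq (hb : IsArtinGenerator b p q) (hpq : p ≠ q) (k : Fin n) :
    MapsToConj (b * b) (.of k) (pureBraidConjugator p q k) := by
  obtain ⟨hp, hq, hk⟩ := hb
  unfold pureBraidConjugator
  by_cases hkp : k = p
  · rw [hkp]
    refine ⟨(.of q)⁻¹, ?_, ?_⟩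
    · rw [MulAut.mul_apply, hp, hq]; group
    · rw [if_pos rfl, aMap_inv, aMap_of]
  by_cases hkq : k = q
  · rw [hkq]
    refine ⟨(.of p * .of q)⁻¹, ?_, ?_⟩
    · rw [MulAut.mul_apply, hq, map_mul, map_mul, map_inv, hp, hq]; group
    · rw [if_neg hpq.symm, if_pos rfl, aMap_inv, aMap_mul, aMap_of, aMap_of]
  · refine ⟨1, ?_, ?_⟩
    · rw [MulAut.mul_apply, hk k hkp hkq, hk k hkp hkq]; group
    · rw [if_neg hkp, if_neg hkq, aMap_one]

lemma mapsToConj_conj (hb : IsArtinGenerator b p q) {α : MulAut (FreeGroup (Fin n))} {i : Fin n}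
    (hip : i ≠ p) (hiq : i ≠ q) (hpq : p ≠ q)
    (hα : ∀ k, MapsToConj α (.of k) (pureBraidConjugator i p k)) (k : Fin n) :
    MapsToConj (b * α * b⁻¹) (.of k) (pureBraidConjugator i q k) := by
  unfold pureBraidConjugator at hα ⊢
  by_cases hkp : k = p
  · have h := ((hα p).conj_left (hα q)).mulAut_conj b
    rw [hb.apply_conj, if_neg hiq.symm, if_neg hpq.symm, map_zero] at h
    rwa [hkp, if_neg hip.symm, if_neg hpq]
  by_cases hkq : k = q
  · have h := (hα p).mulAut_conj b
    rw [hb.1, if_neg hip.symm, if_pos rfl, map_neg, map_add, hb.abelMap_Xz_left,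
      hb.abelMap_Xz_of_ne hip hiq] at h
    rwa [hkq, if_neg hiq.symm, if_pos rfl]
  · have h := (hα k).mulAut_conj b
    rw [hb.2.2 k hkp hkq, if_neg hkp] at h
    rw [if_neg hkq]
    by_cases hki : k = i
    · rw [if_pos hki, map_neg, hb.abelMap_Xz_left] at h
      rwa [if_pos hki]
    · rw [if_neg hki, map_zero] at h
      rwa [if_neg hki]

end IsArtinGenerator

lemma mapsToConj_Ael (ξ : Braid (n - 1) →* MulAut (FreeGroup (Fin n)))
    (hξ : ∀ p q : Fin n, (q : ℕ) = p + 1 → IsArtinGenerator (ξ (sg (n - 1) p)) p q)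
    (i j : Fin n) (hij : i < j) (k : Fin n) :
    MapsToConj (ξ (Ael (n - 1) i j)) (.of k) (pureBraidConjugator i j k) := by
  obtain ⟨j, hj⟩ := j
  replace hij : (i : ℕ) < j := hij
  induction j generalizing k with
  | zero => omega
  | succ j ih =>
    have hb := hξ ⟨j, by omega⟩ ⟨j + 1, hj⟩ rfl
    have hpq : (⟨j, by omega⟩ : Fin n) ≠ ⟨j + 1, hj⟩ := by simp [Fin.ext_iff]
    rcases Nat.lt_succ_iff_lt_or_eq.mp hij with hip | rfl
    · rw [Ael, if_neg (by omega), map_mul, map_mul, map_inv]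
      exact hb.mapsToConj_conj (by simp [Fin.ext_iff]; omega)
        (by simp [Fin.ext_iff]; omega) hpq (fun k => ih k (by omega) hip) k
    · rw [Ael, if_pos rfl, map_mul]
      exact hb.mapsToConj_sq hpq k

end PureBraid

theorem stmt8_general (n : ℕ)
    (β : Fin (n-1) → MulAut (FreeGroup (Fin n)))
    (hβ : ∀ (i : Fin (n-1)) (h1 : (i : ℕ) < n) (h2 : (i : ℕ) + 1 < n),
      β i (FreeGroup.of ⟨i, h1⟩) = FreeGroup.of ⟨(i : ℕ) + 1, h2⟩ ∧
      β i (FreeGroup.of ⟨(i : ℕ) + 1, h2⟩) =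
        (FreeGroup.of (⟨(i : ℕ) + 1, h2⟩ : Fin n))⁻¹ * FreeGroup.of ⟨i, h1⟩ *
          FreeGroup.of ⟨(i : ℕ) + 1, h2⟩ ∧
      ∀ j : Fin n, (j : ℕ) ≠ (i : ℕ) → (j : ℕ) ≠ (i : ℕ) + 1 →
        β i (FreeGroup.of j) = FreeGroup.of j)
    (ξ : Braid (n-1) →* MulAut (FreeGroup (Fin n)))
    (hξ : ∀ i : Fin (n-1), ξ (sigma i) = β i)
    (Φ : MulAut (FreeGroup (Fin n)) → (Hz n →+ Hz n))
    (hΦ : ∀ (φ : MulAut (FreeGroup (Fin n))) (γ : FreeGroup (Fin n)),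
      Φ φ (aMap n γ) = aMap n (φ γ))
    (τ : MulAut (FreeGroup (Fin n)) → (Hz n →+ HHz n))
    (hτ : ∀ (φ : MulAut (FreeGroup (Fin n))) (γ : FreeGroup (Fin n)),
      τ φ (aMap n γ) = theta2 n γ -
        (TensorProduct.map (Φ φ).toIntLinearMap (Φ φ).toIntLinearMap)
          (theta2 n (φ⁻¹ γ)))
 :
    ∀ i j : Fin n, i < j →
      (Φ (ξ (Ael (n-1) i j)) = AddMonoidHom.id (Hz n)) ∧
      τ (ξ (Ael (n-1) i j)) (Xz n i) =
        Xz n i ⊗ₜ[ℤ] Xz n j - Xz n j ⊗ₜ[ℤ] Xz n i ∧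
      τ (ξ (Ael (n-1) i j)) (Xz n j) =
        -(Xz n i ⊗ₜ[ℤ] Xz n j - Xz n j ⊗ₜ[ℤ] Xz n i) ∧
      ∀ k : Fin n, k ≠ i → k ≠ j → τ (ξ (Ael (n-1) i j)) (Xz n k) = 0 := by
  have hArtin : ∀ p q : Fin n, (q : ℕ) = p + 1 → IsArtinGenerator (ξ (sg (n - 1) p)) p q := by
    intro p q hpq
    have hp : (p : ℕ) < n - 1 := by omega
    obtain ⟨q, hq⟩ := q
    change q = p + 1 at hpq
    subst hpq
    obtain ⟨h1, h2, h3⟩ := hβ ⟨p, hp⟩ p.isLt hq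
    rw [sg, dif_pos hp, hξ]
    exact ⟨h1, h2, fun k hkp hkq => h3 k (Fin.val_ne_of_ne hkp) (Fin.val_ne_of_ne hkq)⟩
  intro i j hij
  have hα := mapsToConj_Ael ξ hArtin i j hij
  have hτα k := tau_Xz_of_mapsToConj (hα k) (hτ _)
  refine ⟨addMonoidHom_eq_id_of_mapsToConj hα (hΦ _), ?_, ?_, fun k hki hkj => ?_⟩
  · rw [hτα, pureBraidConjugator, if_pos rfl, TensorProduct.neg_tmul, TensorProduct.tmul_neg]
    abel
  · rw [hτα, pureBraidConjugator, if_neg hij.ne', if_pos rfl, TensorProduct.neg_tmul,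
      TensorProduct.tmul_neg, TensorProduct.add_tmul, TensorProduct.tmul_add]
    abel
  · rw [hτα, pureBraidConjugator, if_neg hki, if_neg hkj, TensorProduct.zero_tmul,
      TensorProduct.tmul_zero, sub_zero]

theorem stmt8 (n : ℕ) (hn : 2 ≤ n)
    (β : Fin (n-1) → MulAut (FreeGroup (Fin n)))
    (hβ : ∀ (i : Fin (n-1)) (h1 : (i : ℕ) < n) (h2 : (i : ℕ) + 1 < n),
      β i (FreeGroup.of ⟨i, h1⟩) = FreeGroup.of ⟨(i : ℕ) + 1, h2⟩ ∧
      β i (FreeGroup.of ⟨(i : ℕ) + 1, h2⟩) =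
        (FreeGroup.of (⟨(i : ℕ) + 1, h2⟩ : Fin n))⁻¹ * FreeGroup.of ⟨i, h1⟩ *
          FreeGroup.of ⟨(i : ℕ) + 1, h2⟩ ∧
      ∀ j : Fin n, (j : ℕ) ≠ (i : ℕ) → (j : ℕ) ≠ (i : ℕ) + 1 →
        β i (FreeGroup.of j) = FreeGroup.of j)
    (ξ : Braid (n-1) →* MulAut (FreeGroup (Fin n)))
    (hξ : ∀ i : Fin (n-1), ξ (sigma i) = β i)
    (Φ : MulAut (FreeGroup (Fin n)) → (Hz n →+ Hz n))
    (hΦ : ∀ (φ : MulAut (FreeGroup (Fin n))) (γ : FreeGroup (Fin n)),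
      Φ φ (aMap n γ) = aMap n (φ γ))
    (τ : MulAut (FreeGroup (Fin n)) → (Hz n →+ HHz n))
    (hτ : ∀ (φ : MulAut (FreeGroup (Fin n))) (γ : FreeGroup (Fin n)),
      τ φ (aMap n γ) = theta2 n γ -
        (TensorProduct.map (Φ φ).toIntLinearMap (Φ φ).toIntLinearMap)
          (theta2 n (φ⁻¹ γ)))
 :
    ∀ i j : Fin n, i < j →
      (Φ (ξ (Ael (n-1) i j)) = AddMonoidHom.id (Hz n)) ∧
      τ (ξ (Ael (n-1) i j)) (Xz n i) =
        Xz n i ⊗ₜ[ℤ] Xz n j - Xz n j ⊗ₜ[ℤ] Xz n i ∧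
      τ (ξ (Ael (n-1) i j)) (Xz n j) =
        -(Xz n i ⊗ₜ[ℤ] Xz n j - Xz n j ⊗ₜ[ℤ] Xz n i) ∧
      ∀ k : Fin n, k ≠ i → k ≠ j → τ (ξ (Ael (n-1) i j)) (Xz n k) = 0 :=
  stmt8_general n β hβ ξ hξ Φ hΦ τ hτ
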